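/- Let V be a 4-dimensional real inner product space with an orthogonal complex structure J, and let {e₁, e₂} be orthonormal vectors with C = ⟨Je₁, e₂⟩ satisfying C² < 1. Then the vectors ẽ₃ = (1-C²)^{-1/2}(C e₁ + J e₂) and ẽ₄ = (1-C²)^{-1/2}(J e₁ - C e₂) are orthonormal, are each orthogonal to e₁ and e₂, and satisfy ⟨J ẽ₃, ẽ₄⟩ = C. -/
import Mathlib


set_option maxHeartbeats 1000000

open RealInnerProductSpace

/-- If `J` is an orthogonal complex structure on a 4-dimensional real inner product
space and `e₁, e₂` are orthonormal with `C = ⟨Je₁,e₂⟩`, `C² < 1`, then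
`f₃ = (1-C²)^{-1/2}(C e₁ + J e₂)` and `f₄ = (1-C²)^{-1/2}(J e₁ - C e₂)` are
orthonormal, orthogonal to `e₁` and `e₂`, and satisfy `⟨J f₃, f₄⟩ = C`. -/
theorem pmc_stmt1 (V : Type*) [NormedAddCommGroup V] [InnerProductSpace ℝ V]
    [FiniteDimensional ℝ V] (hdim : Module.finrank ℝ V = 4)
    (J : V →ₗ[ℝ] V) (hJ2 : ∀ x, J (J x) = -x)
    (hJi : ∀ x y, ⟪J x, J y⟫ = ⟪x, y⟫)
    (e₁ e₂ : V) (he₁ : ‖e₁‖ = 1) (he₂ : ‖e₂‖ = 1) (he₁₂ : ⟪e₁, e₂⟫ = 0)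
    (C : ℝ) (hC : C = ⟪J e₁, e₂⟫) (hC2 : C ^ 2 < 1)
    (f₃ f₄ : V)
    (h3 : f₃ = (Real.sqrt (1 - C ^ 2))⁻¹ • (C • e₁ + J e₂))
    (h4 : f₄ = (Real.sqrt (1 - C ^ 2))⁻¹ • (J e₁ - C • e₂)) :
    ‖f₃‖ = 1 ∧ ‖f₄‖ = 1 ∧ ⟪f₃, f₄⟫ = 0 ∧
    ⟪f₃, e₁⟫ = 0 ∧ ⟪f₃, e₂⟫ = 0 ∧ ⟪f₄, e₁⟫ = 0 ∧ ⟪f₄, e₂⟫ = 0 ∧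
    ⟪J f₃, f₄⟫ = C := by
  have skew : ∀ x y : V, ⟪J x, y⟫ = -⟪x, J y⟫ := by
    intro x y
    have h := hJi (J x) y
    rw [hJ2, inner_neg_left] at h
    linarith
  have h11 : ⟪e₁, e₁⟫ = (1:ℝ) := by
    rw [real_inner_self_eq_norm_sq, he₁]; norm_num
  have h22 : ⟪e₂, e₂⟫ = (1:ℝ) := by
    rw [real_inner_self_eq_norm_sq, he₂]; norm_num
  have h21 : ⟪e₂, e₁⟫ = (0:ℝ) := by rw [real_inner_comm]; exact he₁₂
  have hJ11 : ⟪J e₁, J e₁⟫ = (1:ℝ) := by rw [hJi]; exact h11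
  have hJ22 : ⟪J e₂, J e₂⟫ = (1:ℝ) := by rw [hJi]; exact h22
  have hJ12 : ⟪J e₁, J e₂⟫ = (0:ℝ) := by rw [hJi]; exact he₁₂
  have hJ21 : ⟪J e₂, J e₁⟫ = (0:ℝ) := by rw [hJi]; exact h21
  have hJ1e1 : ⟪J e₁, e₁⟫ = (0:ℝ) := by
    have := skew e₁ e₁
    have h2 := real_inner_comm (J e₁) e₁
    linarith [skew e₁ e₁, (real_inner_comm e₁ (J e₁)).symm]
  have hJ2e2 : ⟪J e₂, e₂⟫ = (0:ℝ) := by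
    linarith [skew e₂ e₂, (real_inner_comm e₂ (J e₂)).symm]
  have he1J1 : ⟪e₁, J e₁⟫ = (0:ℝ) := by rw [real_inner_comm]; exact hJ1e1
  have he2J2 : ⟪e₂, J e₂⟫ = (0:ℝ) := by rw [real_inner_comm]; exact hJ2e2
  have hJ1e2 : ⟪J e₁, e₂⟫ = C := hC.symm
  have he2J1 : ⟪e₂, J e₁⟫ = C := by rw [real_inner_comm]; exact hJ1e2
  have he1J2 : ⟪e₁, J e₂⟫ = -C := by
    have := skew e₁ e₂; rw [hJ1e2] at this; linarith
  have hJ2e1 : ⟪J e₂, e₁⟫ = -C := by rw [real_inner_comm]; exact he1J2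
  set a := Real.sqrt (1 - C ^ 2) with ha
  have hpos : (0:ℝ) < 1 - C ^ 2 := by linarith
  have hsq : a ^ 2 = 1 - C ^ 2 := Real.sq_sqrt (le_of_lt hpos)
  have ha0 : a ≠ 0 := by positivity
  have key3 : ⟪f₃, f₃⟫ = (1:ℝ) := by
    simp only [h3, inner_smul_left, inner_smul_right, inner_add_left, inner_add_right,
      RingHom.id_apply, conj_trivial, h11, he1J2, hJ2e1, hJ22]
    field_simp
    nlinarith [hsq]
  have key4 : ⟪f₄, f₄⟫ = (1:ℝ) := by
    simp only [h4, inner_smul_left, inner_smul_right, inner_sub_left, inner_sub_right,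
      conj_trivial, hJ11, hJ1e2, he2J1, h22]
    field_simp
    nlinarith [hsq]
  refine ⟨?_, ?_, ?_, ?_, ?_, ?_, ?_, ?_⟩
  · have := key3
    rw [real_inner_self_eq_norm_sq] at this
    nlinarith [norm_nonneg f₃]
  · have := key4
    rw [real_inner_self_eq_norm_sq] at this
    nlinarith [norm_nonneg f₄]
  · simp only [h3, h4, inner_smul_left, inner_smul_right, inner_add_left, inner_sub_right,
      conj_trivial, he1J1, he₁₂, hJ21, hJ2e2]
    ring
  · simp only [h3, inner_smul_left, inner_add_left, conj_trivial, h11, hJ2e1]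
    ring
  · simp only [h3, inner_smul_left, inner_add_left, conj_trivial, he₁₂, hJ2e2]
    ring
  · simp only [h4, inner_smul_left, inner_sub_left, conj_trivial, hJ1e1, h21]
    ring
  · simp only [h4, inner_smul_left, inner_sub_left, conj_trivial, hJ1e2, h22]
    ring
  · have hJf3 : J f₃ = (a)⁻¹ • (C • J e₁ - e₂) := by
      rw [h3, map_smul, map_add, map_smul, hJ2]
      module
    simp only [hJf3, h4, inner_smul_left, inner_smul_right, inner_sub_left, inner_sub_right,
      conj_trivial, hJ11, hJ1e2, he2J1, h22]
    have haa : a * a = 1 - C ^ 2 := by nlinarith [hsq]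
    field_simp
    linear_combination C * haa - 2 * C * hsq
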